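/- Chained-replacement lemma: assume (⋆) holds for every i. Let I, I' be instances with V_{i,j}(I) = V_{i,j}(I') for all views, and let t = ⟨t₁,…,t_m⟩ with θ(t) and t_i ∈ I(R_i) for all i. Then for every 0 ≤ ℓ ≤ m there exists a sequence ⟨t₁^ℓ,…,t_ℓ^ℓ⟩ with each t_i^ℓ ∈ I'(R_i), such that the concatenated sequence ⟨t₁^ℓ,…,t_ℓ^ℓ, t_{ℓ+1},…,t_m⟩ satisfies θ and agrees with t on the attribute set U. -/

import Mathlib

/-
Replace the components one at a time, left to right. Given a tuple `s` satisfying `θ` whose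
`ℓ`-th component still comes from `I`, condition (⋆) supplies a view `V_{ℓ,j}` selecting `s ℓ`;
since `I` and `I'` agree on that view, some `t' ∈ I'(R_ℓ)` selected by it has the same
projection, and (⋆) lets `t'` take the place of `s ℓ` without breaking `θ` or changing the
`U`-projection.
-/

open scoped Classical

/-- Restriction `t[U]` of a tuple to an attribute set `U`. -/
noncomputable def restrict {A B : Type*} (U : Set A) (t : A → B) : A → Option B :=
  fun a => if a ∈ U then some (t a) else none

/-- Project-select query `π_U σ_θ S` under set semantics. -/
noncomputable def psView {A B : Type*} (U : Set A) (θ : (A → B) → Prop)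
    (S : Set (A → B)) : Set (A → Option B) :=
  {r | ∃ t ∈ S, θ t ∧ r = restrict U t}

/-- The product tuple of a sequence of tuples `⟨t₁,…,t_m⟩`. -/
def prodTup {m : ℕ} {A B : Type*} (ts : Fin m → A → B) : Fin m × A → B :=
  fun p => ts p.1 p.2

/-- The project-select-join query `Q = π_U σ_θ (R₁ × ⋯ × R_m)` with no self joins. -/
noncomputable def joinQuery {m : ℕ} {A B : Type*} (U : Set (Fin m × A))
    (θ : (Fin m → A → B) → Prop) (I : Fin m → Set (A → B)) :
    Set (Fin m × A → Option B) :=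
  {r | ∃ ts : Fin m → A → B, (∀ i, ts i ∈ I i) ∧ θ ts ∧ r = restrict U (prodTup ts)}

/-- Condition (⋆) for index `i`. -/
def StarCond {m : ℕ} {A B : Type*} (U : Set (Fin m × A)) (θ : (Fin m → A → B) → Prop)
    (n : Fin m → ℕ) (Uv : ∀ i, Fin (n i) → Set A)
    (θv : ∀ i, Fin (n i) → (A → B) → Prop) (i : Fin m) : Prop :=
  ∀ ts : Fin m → A → B, θ ts →
    ∃ j : Fin (n i), θv i j (ts i) ∧
      ∀ t' : A → B, θv i j t' → restrict (Uv i j) t' = restrict (Uv i j) (ts i) →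
        θ (Function.update ts i t') ∧
          restrict U (prodTup (Function.update ts i t')) = restrict U (prodTup ts)

/-- `V` determines `Q`. -/
def Determines {m : ℕ} {A B : Type*} (U : Set (Fin m × A)) (θ : (Fin m → A → B) → Prop)
    (n : Fin m → ℕ) (Uv : ∀ i, Fin (n i) → Set A)
    (θv : ∀ i, Fin (n i) → (A → B) → Prop) : Prop :=
  ∀ I I' : Fin m → Set (A → B),
    (∀ i, ∀ j : Fin (n i), psView (Uv i j) (θv i j) (I i) = psView (Uv i j) (θv i j) (I' i)) →
    joinQuery U θ I = joinQuery U θ I'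

theorem StarCond.exists_update_mem {m : ℕ} {A B : Type*} {U : Set (Fin m × A)}
    {θ : (Fin m → A → B) → Prop} {n : Fin m → ℕ} {Uv : ∀ i, Fin (n i) → Set A}
    {θv : ∀ i, Fin (n i) → (A → B) → Prop} {i : Fin m} (hstar : StarCond U θ n Uv θv i)
    {S S' : Set (A → B)} (hview : ∀ j, psView (Uv i j) (θv i j) S ⊆ psView (Uv i j) (θv i j) S')
    {s : Fin m → A → B} (hθ : θ s) (hs : s i ∈ S) :
    ∃ t' ∈ S', θ (Function.update s i t') ∧
      restrict U (prodTup (Function.update s i t')) = restrict U (prodTup s) := by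
  obtain ⟨j, hθvj, hreplace⟩ := hstar s hθ
  obtain ⟨t', ht'S', hθvt', hproj⟩ := hview j ⟨s i, hs, hθvj, rfl⟩
  exact ⟨t', ht'S', hreplace t' hθvt' hproj.symm⟩

theorem chained_replacement {m : ℕ} {A B : Type*} (U : Set (Fin m × A))
    (θ : (Fin m → A → B) → Prop) (n : Fin m → ℕ) (Uv : ∀ i, Fin (n i) → Set A)
    (θv : ∀ i, Fin (n i) → (A → B) → Prop)
    (hstar : ∀ i : Fin m, StarCond U θ n Uv θv i)
    (I I' : Fin m → Set (A → B))
    (hview : ∀ i, ∀ j : Fin (n i),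
      psView (Uv i j) (θv i j) (I i) = psView (Uv i j) (θv i j) (I' i))
    (ts : Fin m → A → B) (hθ : θ ts) (hmem : ∀ i, ts i ∈ I i) :
    ∀ ℓ : ℕ, ℓ ≤ m →
      ∃ s : Fin m → A → B,
        (∀ i : Fin m, (i : ℕ) < ℓ → s i ∈ I' i) ∧
        (∀ i : Fin m, ℓ ≤ (i : ℕ) → s i = ts i) ∧
        θ s ∧ restrict U (prodTup s) = restrict U (prodTup ts) := by
  intro ℓ
  induction ℓ with
  | zero => exact fun _ => ⟨ts, fun i h => absurd h (Nat.not_lt_zero _), fun _ _ => rfl, hθ, rfl⟩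
  | succ ℓ ih =>
    intro hℓ
    obtain ⟨s, hdone, hrest, hθs, hproj⟩ := ih (ℓ.le_succ.trans hℓ)
    let k : Fin m := ⟨ℓ, hℓ⟩
    have hsk : s k ∈ I k := hrest k le_rfl ▸ hmem k
    obtain ⟨t', ht', hθ', hproj'⟩ :=
      (hstar k).exists_update_mem (fun j => (hview k j).subset) hθs hsk
    refine ⟨Function.update s k t', fun i hi => ?_, fun i hi => ?_, hθ', hproj'.trans hproj⟩
    · rcases Nat.lt_succ_iff_lt_or_eq.mp hi with hlt | heq
      · rw [Function.update_of_ne (Fin.ne_of_val_ne hlt.ne)]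
        exact hdone i hlt
      · obtain rfl : i = k := Fin.ext heq
        rwa [Function.update_self]
    · rw [Function.update_of_ne (Fin.ne_of_val_ne (show (i : ℕ) ≠ ℓ by omega))]
      exact hrest i (Nat.le_of_succ_le hi)
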